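/- Let G be a finite group containing an element whose order equals the exponent of G. Then the order superpower graph S(G) is minimally edge connected if and only if G is a p-group for some prime p. -/

import Mathlib

/-- The degree of a vertex: the number of its neighbours. -/
noncomputable def gDeg {V : Type*} (G : SimpleGraph V) (v : V) : ℕ :=
  (G.neighborSet v).ncard

/-- The minimum degree of a graph. -/
noncomputable def minDeg {V : Type*} (G : SimpleGraph V) : ℕ :=
  sInf (Set.range (gDeg G))

/-- The edge connectivity: the minimum size of a set of edges whose removal
disconnects the graph. -/
noncomputable def edgeConn {V : Type*} (G : SimpleGraph V) : ℕ :=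
  sInf {n : ℕ | ∃ S : Set (Sym2 V), S ⊆ G.edgeSet ∧ S.ncard = n ∧
    ¬ (G.deleteEdges S).Connected}

/-- The vertex connectivity: the minimum size of a set of vertices whose removal
disconnects the graph or leaves a single vertex. -/
noncomputable def vertexConn {V : Type*} (G : SimpleGraph V) : ℕ :=
  sInf {n : ℕ | ∃ S : Set V, S.ncard = n ∧ Sᶜ.Nonempty ∧
    (¬ (G.induce Sᶜ).Preconnected ∨ Sᶜ.ncard = 1)}

/-- A graph is minimally edge connected if deleting any edge decreases the
edge connectivity by one. -/
def MinEdgeConnected {V : Type*} (G : SimpleGraph V) : Prop :=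
  ∀ e ∈ G.edgeSet, edgeConn (G.deleteEdges {e}) = edgeConn G - 1

/-- A graph is minimally connected if deleting any edge decreases the
vertex connectivity by one. -/
def MinConnected {V : Type*} (G : SimpleGraph V) : Prop :=
  ∀ e ∈ G.edgeSet, vertexConn (G.deleteEdges {e}) = vertexConn G - 1

/-- The power graph of a group: distinct `x, y` are adjacent iff one is a
natural power of the other. -/
def powerGraph (G : Type*) [Group G] : SimpleGraph G :=
  SimpleGraph.fromRel (fun x y => ∃ m : ℕ, y = x ^ m)

/-- The enhanced power graph of a group: distinct `x, y` are adjacent iff they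
lie in a common cyclic subgroup. -/
def enhancedPowerGraph (G : Type*) [Group G] : SimpleGraph G :=
  SimpleGraph.fromRel
    (fun x y => ∃ z : G, x ∈ Subgroup.zpowers z ∧ y ∈ Subgroup.zpowers z)

/-- The order superpower graph of a group: distinct `x, y` are adjacent iff the
order of one divides the order of the other. -/
def superpowerGraph (G : Type*) [Group G] : SimpleGraph G :=
  SimpleGraph.fromRel (fun x y => orderOf x ∣ orderOf y)


/-!
In a group of full exponent, `1` and every element of order `exp G`, say `g` and `g⁻¹`, are
adjacent to every other vertex of `S(G)`. In a graph with a
universal vertex the edge connectivity equals the minimum degree: the side of a minimum cut not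
containing the universal vertex is a set `A` each of whose vertices sends an edge across the cut,
and counting these edges shows that some vertex of `A` has degree at most the size of the cut.

If `G` is a `p`-group its element orders are totally ordered by divisibility, so `S(G)` is
complete, and deleting an edge of `Kₙ` lowers the edge connectivity from `n - 1` to `n - 2`.
Otherwise two elements of distinct prime orders are non-adjacent, so the edge connectivity is at
most `n - 2`; deleting the edge `{g, g⁻¹}` keeps `1` universal and every degree at least the old
edge connectivity, so the edge connectivity does not drop.
-/

open SimpleGraph

section EdgeConnectivity

variable {V : Type*} {Γ : SimpleGraph V}

lemma ncard_incidenceSet (Γ : SimpleGraph V) (v : V) :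
    (Γ.incidenceSet v).ncard = gDeg Γ v := by
  classical
  rw [gDeg, ← Nat.card_coe_set_eq, ← Nat.card_coe_set_eq]
  exact Nat.card_congr (Γ.incidenceSetEquivNeighborSet v)

lemma not_connected_deleteEdges_incidenceSet {u v : V} (huv : u ≠ v) :
    ¬ (Γ.deleteEdges (Γ.incidenceSet v)).Connected := by
  intro hconn
  obtain ⟨p⟩ := hconn.preconnected v u
  cases p with
  | nil => exact huv rfl
  | cons hadj _ =>
    rw [deleteEdges_adj] at hadj
    exact hadj.2 ((Γ.mem_incidenceSet _ _).mpr hadj.1)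

lemma edgeConn_le_gDeg [Nontrivial V] (Γ : SimpleGraph V) (v : V) : edgeConn Γ ≤ gDeg Γ v := by
  obtain ⟨u, hvu⟩ := exists_ne v
  exact Nat.sInf_le ⟨_, Γ.incidenceSet_subset v, ncard_incidenceSet Γ v,
    not_connected_deleteEdges_incidenceSet hvu⟩

lemma exists_ncard_eq_edgeConn [Nontrivial V] (Γ : SimpleGraph V) :
    ∃ S ⊆ Γ.edgeSet, S.ncard = edgeConn Γ ∧ ¬ (Γ.deleteEdges S).Connected := by
  obtain ⟨u, v, huv⟩ := exists_pair_ne V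
  exact Nat.sInf_mem (s := {n | ∃ S ⊆ Γ.edgeSet, S.ncard = n ∧ ¬ (Γ.deleteEdges S).Connected})
    ⟨_, _, Γ.incidenceSet_subset v, ncard_incidenceSet Γ v,
    not_connected_deleteEdges_incidenceSet huv⟩

lemma edgeConn_le_edgeConn_deleteEdges_add_one {a b : V} (hab : Γ.Adj a b) :
    edgeConn Γ ≤ edgeConn (Γ.deleteEdges {s(a, b)}) + 1 := by
  have : Nontrivial V := ⟨⟨a, b, Γ.ne_of_adj hab⟩⟩
  obtain ⟨S, hSsub, hScard, hSdisc⟩ := exists_ncard_eq_edgeConn (Γ.deleteEdges {s(a, b)})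
  have hsub : insert s(a, b) S ⊆ Γ.edgeSet :=
    Set.insert_subset hab (hSsub.trans (edgeSet_mono (Γ.deleteEdges_le _)))
  have hdisc : ¬ (Γ.deleteEdges (insert s(a, b) S)).Connected := by
    rwa [← Set.singleton_union, ← deleteEdges_deleteEdges]
  calc edgeConn Γ ≤ (insert s(a, b) S).ncard := Nat.sInf_le ⟨_, hsub, rfl, hdisc⟩
    _ ≤ S.ncard + 1 := Set.ncard_insert_le _ S
    _ = edgeConn (Γ.deleteEdges {s(a, b)}) + 1 := by rw [hScard]

lemma neighborSet_deleteEdges_singleton (a b : V) :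
    (Γ.deleteEdges {s(a, b)}).neighborSet a = Γ.neighborSet a \ {b} := by
  ext w
  simp only [mem_neighborSet, deleteEdges_adj, Set.mem_singleton_iff, Set.mem_sdiff]
  grind [Sym2.congr_right]

lemma neighborSet_deleteEdges_singleton_of_ne {a b v : V} (hva : v ≠ a) (hvb : v ≠ b) :
    (Γ.deleteEdges {s(a, b)}).neighborSet v = Γ.neighborSet v := by
  ext w
  simp only [mem_neighborSet, deleteEdges_adj, Set.mem_singleton_iff, and_iff_left_iff_imp]
  rintro - h
  rcases Sym2.eq_iff.mp h with ⟨rfl, -⟩ | ⟨rfl, -⟩ <;> contradiction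

lemma gDeg_deleteEdges_singleton [Finite V] {a b : V} (hab : Γ.Adj a b) :
    gDeg (Γ.deleteEdges {s(a, b)}) a = gDeg Γ a - 1 := by
  rw [gDeg, neighborSet_deleteEdges_singleton,
    Set.ncard_sdiff_singleton_of_mem (s := Γ.neighborSet a) hab, gDeg]

lemma gDeg_eq_degree (Γ : SimpleGraph V) (v : V) [Fintype (Γ.neighborSet v)] :
    gDeg Γ v = Γ.degree v := by
  rw [gDeg, Set.ncard_eq_toFinset_card', ← neighborFinset_def, card_neighborFinset_eq_degree]

lemma exists_degree_le_card_of_forall_exists_adj_notMem [Fintype V] [DecidableEq V]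
    [DecidableRel Γ.Adj] {A : Finset V} {S : Finset (Sym2 V)} (hA : A.Nonempty)
    (hout : ∀ a ∈ A, ∃ b ∉ A, Γ.Adj a b) (hS : ∀ a ∈ A, ∀ b ∉ A, Γ.Adj a b → s(a, b) ∈ S) :
    ∃ a, Γ.degree a ≤ S.card := by
  set out : V → ℕ := fun a => (Γ.neighborFinset a \ A).card
  have hsum : ∑ a ∈ A, out a ≤ S.card := by
    rw [← Finset.card_sigma]
    refine Finset.card_le_card_of_injOn (fun x => s(x.1, x.2)) ?_ ?_
    · rintro ⟨a, b⟩ hab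
      simp only [Finset.coe_sigma, Set.mem_sigma_iff, Finset.mem_coe, Finset.mem_sdiff,
        mem_neighborFinset] at hab
      exact hS a hab.1 b hab.2.2 hab.2.1
    · rintro ⟨a, b⟩ hab ⟨a', b'⟩ hab' heq
      simp only [Finset.coe_sigma, Set.mem_sigma_iff, Finset.mem_coe, Finset.mem_sdiff] at hab hab'
      rcases Sym2.eq_iff.mp heq with ⟨rfl, rfl⟩ | ⟨rfl, rfl⟩
      · rfl
      · exact absurd hab.1 hab'.2.2
  obtain ⟨a, haA, hmin⟩ := Finset.exists_min_image A out hA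
  have hout_pos : 0 < out a := by
    obtain ⟨b, hbA, hab⟩ := hout a haA
    exact Finset.card_pos.mpr ⟨b, Finset.mem_sdiff.mpr ⟨(Γ.mem_neighborFinset a b).mpr hab, hbA⟩⟩
  have hdeg : Γ.degree a ≤ (A.card - 1) + out a := by
    have hsub : Γ.neighborFinset a ⊆ A.erase a ∪ (Γ.neighborFinset a \ A) := by
      intro x hx
      by_cases hxA : x ∈ A
      · have hxa : x ≠ a := (Γ.ne_of_adj ((Γ.mem_neighborFinset a x).mp hx)).symm
        exact Finset.mem_union_left _ (Finset.mem_erase.mpr ⟨hxa, hxA⟩)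
      · exact Finset.mem_union_right _ (Finset.mem_sdiff.mpr ⟨hx, hxA⟩)
    calc Γ.degree a ≤ (A.erase a ∪ (Γ.neighborFinset a \ A)).card := Finset.card_le_card hsub
      _ ≤ (A.erase a).card + out a := Finset.card_union_le _ _
      _ = (A.card - 1) + out a := by rw [Finset.card_erase_of_mem haA]
  refine ⟨a, ?_⟩
  calc Γ.degree a ≤ (A.card - 1) + out a := hdeg
    _ ≤ A.card * out a := by
      obtain ⟨n, hn⟩ := Nat.exists_eq_succ_of_ne_zero (Finset.card_ne_zero.mpr hA)
      rw [hn, Nat.succ_sub_one]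
      nlinarith
    _ ≤ ∑ b ∈ A, out b := by simpa using Finset.card_nsmul_le_sum A out (out a) hmin
    _ ≤ S.card := hsum

lemma SimpleGraph.IsUniversal.exists_gDeg_le_ncard_of_not_connected [Finite V] {u : V}
    (hu : Γ.IsUniversal u) {S : Set (Sym2 V)} (hS : ¬ (Γ.deleteEdges S).Connected) :
    ∃ v, gDeg Γ v ≤ S.ncard := by
  classical
  have := Fintype.ofFinite V
  set Γ' := Γ.deleteEdges S
  obtain ⟨w, hw⟩ : ∃ w, ¬ Γ'.Reachable u w := by
    by_contra! h
    have : Nonempty V := ⟨u⟩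
    exact hS ⟨fun x y => (h x).symm.trans (h y)⟩
  set A := Finset.univ.filter (fun x => ¬ Γ'.Reachable u x) with hA
  have hout : ∀ a ∈ A, ∃ b ∉ A, Γ.Adj a b := by
    intro a ha
    have hau : a ≠ u := by rintro rfl; simp [hA] at ha
    exact ⟨u, by simp [hA], (hu hau.symm).symm⟩
  have hcross : ∀ a ∈ A, ∀ b ∉ A, Γ.Adj a b → s(a, b) ∈ S.toFinset := by
    intro a ha b hb hab
    by_contra hnot
    simp only [hA, Finset.mem_filter, Finset.mem_univ, true_and, not_not] at ha hb
    have hba : Γ'.Adj b a :=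
      deleteEdges_adj.mpr ⟨hab.symm, by rwa [Sym2.eq_swap, ← Set.mem_toFinset]⟩
    exact ha (hb.trans hba.reachable)
  obtain ⟨v, hv⟩ := exists_degree_le_card_of_forall_exists_adj_notMem ⟨w, by simpa [hA]⟩ hout hcross
  exact ⟨v, by rwa [gDeg_eq_degree, Set.ncard_eq_toFinset_card']⟩

lemma SimpleGraph.IsUniversal.exists_gDeg_le_edgeConn [Finite V] [Nontrivial V] {u : V}
    (hu : Γ.IsUniversal u) : ∃ v, gDeg Γ v ≤ edgeConn Γ := by
  obtain ⟨S, -, hScard, hS⟩ := exists_ncard_eq_edgeConn Γ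
  exact hScard ▸ hu.exists_gDeg_le_ncard_of_not_connected hS

lemma edgeConn_pos [Finite V] [Nontrivial V] (hΓ : Γ.Connected) : 0 < edgeConn Γ := by
  obtain ⟨S, -, hScard, hS⟩ := exists_ncard_eq_edgeConn Γ
  refine Nat.pos_of_ne_zero fun h => hS ?_
  rwa [(Set.ncard_eq_zero).mp (hScard.trans h), deleteEdges_empty]

lemma SimpleGraph.IsUniversal.gDeg_eq [Finite V] {u : V} (hu : Γ.IsUniversal u) :
    gDeg Γ u = Nat.card V - 1 := by
  rw [gDeg, hu.neighborSet_eq, Set.ncard_compl, Set.ncard_singleton]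

lemma gDeg_lt_of_not_adj [Finite V] {a b : V} (hab : a ≠ b) (h : ¬ Γ.Adj a b) :
    gDeg Γ a < Nat.card V - 1 := by
  classical
  have := Fintype.ofFinite V
  rw [gDeg_eq_degree, Nat.card_eq_fintype_card, degree_lt_card_sub_one]
  exact fun hu => h (hu hab)

lemma minEdgeConnected_of_forall_adj_gDeg_eq [Finite V]
    (h : ∀ a b, Γ.Adj a b → gDeg Γ a = edgeConn Γ) : MinEdgeConnected Γ := by
  refine Sym2.ind fun a b (he : Γ.Adj a b) => ?_
  have : Nontrivial V := ⟨⟨a, b, Γ.ne_of_adj he⟩⟩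
  have hge := edgeConn_le_edgeConn_deleteEdges_add_one he
  have hle := edgeConn_le_gDeg (Γ.deleteEdges {s(a, b)}) a
  rw [gDeg_deleteEdges_singleton he, h a b he] at hle
  omega

lemma minEdgeConnected_top [Finite V] : MinEdgeConnected (⊤ : SimpleGraph V) := by
  refine minEdgeConnected_of_forall_adj_gDeg_eq fun a b hab => ?_
  have : Nontrivial V := ⟨⟨a, b, hab⟩⟩
  have hdeg (v : V) : gDeg ⊤ v = Nat.card V - 1 := IsUniversal.top.gDeg_eq
  obtain ⟨v, hv⟩ := (IsUniversal.top (v := a)).exists_gDeg_le_edgeConn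
  rw [hdeg] at hv
  exact le_antisymm (hdeg a ▸ hv) (hdeg a ▸ edgeConn_le_gDeg ⊤ a)

lemma not_minEdgeConnected_of_isUniversal [Finite V] {u x y a b : V} (hu : Γ.IsUniversal u)
    (hx : Γ.IsUniversal x) (hy : Γ.IsUniversal y) (hux : u ≠ x) (huy : u ≠ y) (hxy : x ≠ y)
    (hab : a ≠ b) (hnadj : ¬ Γ.Adj a b) : ¬ MinEdgeConnected Γ := by
  intro hmin
  have : Nontrivial V := ⟨⟨x, y, hxy⟩⟩
  set Γ' := Γ.deleteEdges {s(x, y)}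
  have hu' : Γ'.IsUniversal u := fun w huw => deleteEdges_adj.mpr ⟨hu huw, by
    rw [Set.mem_singleton_iff, Sym2.eq_iff]
    rintro (⟨rfl, -⟩ | ⟨rfl, -⟩) <;> contradiction⟩
  have hκ : edgeConn Γ ≤ Nat.card V - 2 := by
    have := edgeConn_le_gDeg Γ a
    have := gDeg_lt_of_not_adj hab hnadj
    omega
  have hmono : edgeConn Γ ≤ edgeConn Γ' := by
    obtain ⟨v, hv⟩ := hu'.exists_gDeg_le_edgeConn
    refine le_trans ?_ hv
    by_cases hvx : v = x
    · rw [hvx, gDeg_deleteEdges_singleton (hx hxy), hx.gDeg_eq]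
      omega
    by_cases hvy : v = y
    · rw [hvy, show Γ' = Γ.deleteEdges {s(y, x)} by rw [Sym2.eq_swap],
        gDeg_deleteEdges_singleton (hy hxy.symm), hy.gDeg_eq]
      omega
    rw [gDeg, neighborSet_deleteEdges_singleton_of_ne hvx hvy]
    exact edgeConn_le_gDeg Γ v
  have hpos := edgeConn_pos (Connected.of_isUniversal hu)
  have hdrop : edgeConn Γ' = edgeConn Γ - 1 := hmin s(x, y) (hx hxy)
  omega

end EdgeConnectivity

lemma exists_prime_ne_dvd_of_not_prime_pow {n : ℕ} (h : ¬ ∃ p k : ℕ, p.Prime ∧ n = p ^ k) :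
    ∃ p q : ℕ, p.Prime ∧ q.Prime ∧ p ≠ q ∧ p ∣ n ∧ q ∣ n := by
  have hn : n ≠ 1 := fun hn => h ⟨2, 0, Nat.prime_two, by rw [hn, pow_zero]⟩
  have hnpp : ¬ IsPrimePow n := fun ⟨p, k, hp, _, hpk⟩ => h ⟨p, k, hp.nat_prime, hpk.symm⟩
  by_contra! hunique
  refine hnpp (isPrimePow_iff_unique_prime_dvd.mpr
    ⟨n.minFac, ⟨Nat.minFac_prime hn, Nat.minFac_dvd n⟩, fun q ⟨hq, hqn⟩ => ?_⟩)
  by_contra hne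
  exact hunique _ _ (Nat.minFac_prime hn) hq (Ne.symm hne) (Nat.minFac_dvd n) hqn

section SuperpowerGraph

variable {G : Type*} [Group G]

lemma superpowerGraph_adj {x y : G} :
    (superpowerGraph G).Adj x y ↔ x ≠ y ∧ (orderOf x ∣ orderOf y ∨ orderOf y ∣ orderOf x) :=
  fromRel_adj _ x y

lemma isUniversal_superpowerGraph_one : (superpowerGraph G).IsUniversal 1 :=
  fun _ hx => superpowerGraph_adj.mpr ⟨hx, .inl (by rw [orderOf_one]; exact one_dvd _)⟩

lemma isUniversal_superpowerGraph_of_orderOf_eq_exponent {g : G}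
    (hg : orderOf g = Monoid.exponent G) : (superpowerGraph G).IsUniversal g :=
  fun x hx => superpowerGraph_adj.mpr ⟨hx, .inr (hg ▸ Monoid.order_dvd_exponent x)⟩

lemma superpowerGraph_eq_top_of_card_eq_prime_pow {p n : ℕ} (hp : p.Prime)
    (hG : Nat.card G = p ^ n) : superpowerGraph G = ⊤ := by
  have hpow (x : G) : ∃ i, orderOf x = p ^ i := by
    obtain ⟨i, -, hi⟩ := (Nat.dvd_prime_pow hp).mp (hG ▸ orderOf_dvd_natCard x)
    exact ⟨i, hi⟩
  refine eq_top_iff_forall_ne_adj.mpr fun x y hxy => superpowerGraph_adj.mpr ⟨hxy, ?_⟩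
  obtain ⟨i, hi⟩ := hpow x
  obtain ⟨j, hj⟩ := hpow y
  rw [hi, hj]
  exact (le_total i j).imp (pow_dvd_pow p) (pow_dvd_pow p)

lemma exists_orderOf_eq_prime_ne_of_not_prime_pow [Finite G]
    (hG : ¬ ∃ p n : ℕ, p.Prime ∧ Nat.card G = p ^ n) :
    ∃ (a b : G) (p q : ℕ), p.Prime ∧ q.Prime ∧ p ≠ q ∧ orderOf a = p ∧ orderOf b = q := by
  obtain ⟨p, q, hp, hq, hpq, hpG, hqG⟩ := exists_prime_ne_dvd_of_not_prime_pow hG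
  obtain ⟨a, ha⟩ := exists_prime_orderOf_dvd_card' (hp := ⟨hp⟩) p hpG
  obtain ⟨b, hb⟩ := exists_prime_orderOf_dvd_card' (hp := ⟨hq⟩) q hqG
  exact ⟨a, b, p, q, hp, hq, hpq, ha, hb⟩

lemma two_lt_exponent_of_orderOf_prime [Finite G] {a b : G} {p q : ℕ} (hp : p.Prime)
    (hq : q.Prime) (hpq : p ≠ q) (ha : orderOf a = p) (hb : orderOf b = q) :
    2 < Monoid.exponent G := by
  have hexp := Nat.pos_of_ne_zero (Monoid.exponent_ne_zero_of_finite (G := G))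
  have hpe := Nat.le_of_dvd hexp (ha ▸ Monoid.order_dvd_exponent a)
  have hqe := Nat.le_of_dvd hexp (hb ▸ Monoid.order_dvd_exponent b)
  have := hp.two_le
  have := hq.two_le
  omega

lemma ne_inv_of_two_lt_orderOf {g : G} (hg : 2 < orderOf g) : g ≠ g⁻¹ := by
  intro h
  have hsq : g ^ 2 = 1 := by rwa [sq, mul_eq_one_iff_eq_inv]
  have := Nat.le_of_dvd two_pos (orderOf_dvd_of_pow_eq_one hsq)
  omega

end SuperpowerGraph

/-- For a finite group `G` of full exponent, the order superpower
graph is minimally edge connected iff `G` is a `p`-group for some prime `p`. -/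
theorem stmt_8 (G : Type*) [Group G] [Fintype G]
    (hfull : ∃ g : G, orderOf g = Monoid.exponent G) :
    MinEdgeConnected (superpowerGraph G) ↔
      ∃ p n : ℕ, p.Prime ∧ Nat.card G = p ^ n := by
  obtain ⟨g, hg⟩ := hfull
  refine ⟨fun hmin => ?_, fun ⟨p, n, hp, hG⟩ => ?_⟩
  · by_contra hnp
    obtain ⟨a, b, p, q, hp, hq, hpq, ha, hb⟩ := exists_orderOf_eq_prime_ne_of_not_prime_pow hnp
    have hab : a ≠ b := fun h => hpq (ha ▸ hb ▸ congrArg orderOf h)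
    have hnadj : ¬ (superpowerGraph G).Adj a b := by
      rw [superpowerGraph_adj, ha, hb, Nat.prime_dvd_prime_iff_eq hp hq,
        Nat.prime_dvd_prime_iff_eq hq hp]
      exact fun ⟨_, h⟩ => h.elim hpq (Ne.symm hpq)
    have h2 : 2 < orderOf g := hg ▸ two_lt_exponent_of_orderOf_prime hp hq hpq ha hb
    have hg₁ : g ≠ 1 := fun h => by simp [h] at h2
    exact not_minEdgeConnected_of_isUniversal isUniversal_superpowerGraph_one
      (isUniversal_superpowerGraph_of_orderOf_eq_exponent hg)
      (isUniversal_superpowerGraph_of_orderOf_eq_exponent ((orderOf_inv g).trans hg))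
      hg₁.symm (inv_ne_one.mpr hg₁).symm (ne_inv_of_two_lt_orderOf h2) hab hnadj hmin
  · rw [superpowerGraph_eq_top_of_card_eq_prime_pow hp hG]
    exact minEdgeConnected_top
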